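/- In the setting of the previous statement with M = Ω_k⁻¹ where Ω_k = E[z̄_k(X) z̄_k(X)ᵀ] is invertible and r(O) = z̄_k(X)(A − p̂(X)) with E[A | X] = p(X): the mean of the quadratic-form U-statistic equals E[(p(X) − p̂(X)) Π[p − p̂ | z̄_k](X)] = ‖Π[p − p̂ | z̄_k]‖²_{L²(law of X)}, the squared L² norm of the projection of the estimation error p − p̂ onto span(z̄_k). -/

import Mathlib

/-! By the tower property, `E[z̄ₖ(X) A] = E[z̄ₖ(X) p(X)]`, so `μ` is the vector
`ν = E[z̄ₖ(X)(p − p̂)(X)]` and the projection is `Π = z̄ₖᵀ c` with `c = Ωₖ⁻¹ ν`. Then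
`μᵀ Ωₖ⁻¹ μ = ν ⬝ c`, while `E[(p − p̂) Π] = ν ⬝ c` by linearity and
`E[Π²] = cᵀ Ωₖ c = ν ⬝ c` since `Ωₖ` is the Gram matrix of `z̄ₖ(X)`. -/

open MeasureTheory Matrix

section TowerProperty

variable {Ω : Type*} {m mΩ : MeasurableSpace Ω} {μ : Measure Ω} [IsFiniteMeasure μ]

theorem integral_mul_condExp_of_bound (hm : m ≤ mΩ) {f g : Ω → ℝ}
    (hf : StronglyMeasurable[m] f) (hg : Integrable g μ) (c : ℝ)
    (hf_bound : ∀ᵐ ω ∂μ, ‖f ω‖ ≤ c) :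
    ∫ ω, f ω * μ[g|m] ω ∂μ = ∫ ω, f ω * g ω ∂μ :=
  (integral_congr_ae (condExp_stronglyMeasurable_mul_of_bound hm hf hg c hf_bound)).symm.trans
    (integral_condExp hm)

theorem integral_comp_mul_eq_of_condExp_comap_ae_eq {𝒳 : Type*} [MeasurableSpace 𝒳]
    {X : Ω → 𝒳} (hX : Measurable X) {A f : Ω → ℝ} (hA : Integrable A μ)
    (hAf : μ[A|MeasurableSpace.comap X inferInstance] =ᵐ[μ] f)
    {g : 𝒳 → ℝ} (hg : Measurable g) {C : ℝ} (hgC : ∀ x, |g x| ≤ C) :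
    ∫ ω, g (X ω) * A ω ∂μ = ∫ ω, g (X ω) * f ω ∂μ := by
  rw [← integral_mul_condExp_of_bound (f := fun ω => g (X ω)) hX.comap_le
    (hg.comp (comap_measurable X)).stronglyMeasurable hA C (ae_of_all _ fun ω => hgC (X ω))]
  exact integral_congr_ae (hAf.mono fun ω h => by simp only [h])

end TowerProperty

section GramMatrix

variable {Ω ι : Type*} [Fintype ι] {mΩ : MeasurableSpace Ω} {μ : Measure Ω}

theorem integral_mul_sum_mul (f : Ω → ℝ) (g : ι → Ω → ℝ) (c : ι → ℝ)
    (hgf : ∀ i, Integrable (fun ω => g i ω * f ω) μ) :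
    ∫ ω, f ω * ∑ i, g i ω * c i ∂μ = (fun i => ∫ ω, g i ω * f ω ∂μ) ⬝ᵥ c := by
  have hexpand : ∀ ω, f ω * ∑ i, g i ω * c i = ∑ i, g i ω * f ω * c i := fun ω => by
    rw [Finset.mul_sum]
    exact Finset.sum_congr rfl fun i _ => by ring
  simp only [hexpand, dotProduct]
  rw [integral_finsetSum _ fun i _ => (hgf i).mul_const (c i)]
  exact Finset.sum_congr rfl fun i _ => integral_mul_const (c i) _

theorem integral_sum_mul_sq (g : ι → Ω → ℝ) (c : ι → ℝ)
    (hg : ∀ i j, Integrable (fun ω => g i ω * g j ω) μ) :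
    ∫ ω, (∑ i, g i ω * c i) ^ 2 ∂μ
      = (Matrix.of fun i j => ∫ ω, g i ω * g j ω ∂μ) *ᵥ c ⬝ᵥ c := by
  have hint : ∀ i, Integrable (fun ω => g i ω * ∑ j, g j ω * c j) μ := fun i => by
    simp only [Finset.mul_sum, ← mul_assoc]
    exact integrable_finsetSum _ fun j _ => (hg i j).mul_const (c j)
  simp only [sq]
  rw [integral_mul_sum_mul _ g c hint]
  congr 1
  ext i
  rw [integral_mul_sum_mul _ g c fun j => hg j i]
  simp only [mulVec, dotProduct, of_apply]
  exact Finset.sum_congr rfl fun j _ => by simp only [mul_comm (g j _)]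

end GramMatrix

theorem sum_sum_mul_mul_eq_dotProduct_mulVec {ι R : Type*} [Fintype ι] [NonUnitalSemiring R]
    (M : Matrix ι ι R) (v : ι → R) :
    ∑ i, ∑ j, v i * M i j * v j = v ⬝ᵥ M *ᵥ v := by
  simp only [dotProduct, mulVec, Finset.mul_sum, mul_assoc]

/-- The mean `μᵀ Ωₖ⁻¹ μ` of the quadratic-form U-statistic `IF₂₂` with
`r(O) = z̄ₖ(X)(A − p̂(X))`, `μ = E[z̄ₖ(X)(A − p̂(X))]`, `Ωₖ = E[z̄ₖ(X) z̄ₖ(X)ᵀ]` and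
`E[A | X] = p(X)`, equals `E[(p(X) − p̂(X)) Π[p − p̂ | z̄ₖ](X)]`, the squared `L²` norm
`‖Π[p − p̂ | z̄ₖ]‖²` of the projection of the estimation error onto `span(z̄ₖ)`. -/
theorem stmt_13 {Ω 𝒳 : Type*} [MeasurableSpace 𝒳] {mΩ : MeasurableSpace Ω}
    (μ : Measure Ω) [IsProbabilityMeasure μ]
    (X : Ω → 𝒳) (hX : Measurable X) (A : Ω → ℝ) (hA : Integrable A μ)
    {k : ℕ} (z : 𝒳 → Fin k → ℝ) (hzm : ∀ i, Measurable fun x => z x i)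
    (hzb : ∃ C : ℝ, ∀ x i, |z x i| ≤ C)
    (p phat : 𝒳 → ℝ)
    (hpX : MemLp (fun ω => p (X ω)) 2 μ) (hphatX : MemLp (fun ω => phat (X ω)) 2 μ)
    -- E[A | X] = p(X):
    (hp : μ[A|MeasurableSpace.comap X inferInstance] =ᵐ[μ] fun ω => p (X ω))
    (Ωmat : Matrix (Fin k) (Fin k) ℝ)
    (hΩ : ∀ i j, Ωmat i j = ∫ ω, z (X ω) i * z (X ω) j ∂μ)
    (hΩinv : IsUnit Ωmat.det)
    (μvec : Fin k → ℝ)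
    (hμvec : ∀ i, μvec i = ∫ ω, z (X ω) i * (A ω - phat (X ω)) ∂μ)
    -- the L²(law of X) projection of p − p̂ onto span(z̄ₖ):
    (Pf : 𝒳 → ℝ)
    (hPf : ∀ x, Pf x = ∑ i, z x i *
      Ωmat⁻¹.mulVec (fun j => ∫ ω, z (X ω) j * (p (X ω) - phat (X ω)) ∂μ) i) :
    (∑ i, ∑ j, μvec i * Ωmat⁻¹ i j * μvec j
        = ∫ ω, (p (X ω) - phat (X ω)) * Pf (X ω) ∂μ) ∧
    (∑ i, ∑ j, μvec i * Ωmat⁻¹ i j * μvec j = ∫ ω, (Pf (X ω))^2 ∂μ) := by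
  obtain ⟨C, hC⟩ := hzb
  set ν : Fin k → ℝ := fun j => ∫ ω, z (X ω) j * (p (X ω) - phat (X ω)) ∂μ
  set c := Ωmat⁻¹ *ᵥ ν
  have hzX : ∀ i, Measurable fun ω => z (X ω) i := fun i => (hzm i).comp hX
  have hz_mul : ∀ i {f : Ω → ℝ}, Integrable f μ → Integrable (fun ω => z (X ω) i * f ω) μ :=
    fun i _ hf => hf.bdd_mul (hzX i).aestronglyMeasurable (ae_of_all _ fun ω => hC (X ω) i)
  have hp_int := hpX.integrable one_le_two
  have hphat_int := hphatX.integrable one_le_two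
  have hμν : μvec = ν := funext fun i => by
    simp only [hμvec, ν, mul_sub]
    rw [integral_sub (hz_mul i hA) (hz_mul i hphat_int),
      integral_sub (hz_mul i hp_int) (hz_mul i hphat_int),
      integral_comp_mul_eq_of_condExp_comap_ae_eq hX hA hp (hzm i) (fun x => hC x i)]
  have hΩc : Ωmat *ᵥ c = ν := by
    rw [mulVec_mulVec, mul_nonsing_inv _ hΩinv, one_mulVec]
  have hGram : (Matrix.of fun i j => ∫ ω, z (X ω) i * z (X ω) j ∂μ) = Ωmat :=
    Matrix.ext fun i j => (hΩ i j).symm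
  have hquad : ∑ i, ∑ j, μvec i * Ωmat⁻¹ i j * μvec j = ν ⬝ᵥ c := by
    rw [sum_sum_mul_mul_eq_dotProduct_mulVec, hμν]
  simp only [hPf]
  refine ⟨hquad.trans ?_, hquad.trans ?_⟩
  · exact (integral_mul_sum_mul _ (fun i ω => z (X ω) i) c
      fun i => hz_mul i (hp_int.sub hphat_int)).symm
  · rw [integral_sum_mul_sq (fun i ω => z (X ω) i) c fun i j => hz_mul i
      (Integrable.of_bound (hzX j).aestronglyMeasurable C (ae_of_all _ fun ω => hC (X ω) j)),
      hGram, hΩc, dotProduct_comm]
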